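/- arXiv:1307.3343 — 3 statements merged into one kernel-verified Lean document; each statement's English description precedes it below -/
import Mathlib

section
/- For every \lambda in the unit disk with \lambda \ne 0, \left\|\left(\log(1-|\lambda|^2) + \frac{|\lambda|^2}{1-|\lambda|^2}\right) k_{\bar{\lambda}} + \lambda \log(1-|\lambda|^2)\, \widetilde{k}_{\bar{\lambda}}\right\|^2 = \frac{[\log(1-|\lambda|^2)]^2 + |\lambda|^2\log(1-|\lambda|^2)}{(1-|\lambda|^2)^2}, where the norm is the Dirichlet space norm. -/
open Complex

/-! With `r = |λ|²` and `a = log (1 - r)`, the `n`-th Taylor coefficient of the combination is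
`(a + r (1 - r)⁻¹ / (n + 1)) λⁿ`. Squaring and weighting by `n + 1` splits the norm into the three
classical series `∑ (n + 1) rⁿ = (1 - r)⁻²`, `∑ rⁿ⁺¹ = r / (1 - r)` and
`∑ rⁿ⁺¹ / (n + 1) = -log (1 - r)`. -/

theorem hasSum_succ_mul_geometric {𝕜 : Type*} [NormedField 𝕜] [HasSummableGeomSeries 𝕜]
    {r : 𝕜} (hr : ‖r‖ < 1) : HasSum (fun n : ℕ => ((n : 𝕜) + 1) * r ^ n) (1 / (1 - r) ^ 2) := by
  simpa using hasSum_choose_mul_geometric_of_norm_lt_one 1 hr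

theorem hasSum_succ_mul_sq_mul_geometric (a c : ℝ) {r : ℝ} (hr : |r| < 1) :
    HasSum (fun n : ℕ => ((n : ℝ) + 1) * (a + r * c / ((n : ℝ) + 1)) ^ 2 * r ^ n)
      (a ^ 2 / (1 - r) ^ 2 + 2 * a * c * r / (1 - r) - c ^ 2 * r * Real.log (1 - r)) := by
  have hr' : ‖r‖ < 1 := by rwa [Real.norm_eq_abs]
  have hgeom : HasSum (fun n : ℕ => r ^ (n + 1)) (r / (1 - r)) := by
    simpa [pow_succ', div_eq_mul_inv] using (hasSum_geometric_of_norm_lt_one hr').mul_left r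
  have hsum := (((hasSum_succ_mul_geometric hr').mul_left (a ^ 2)).add
    (hgeom.mul_left (2 * a * c))).add
    ((Real.hasSum_pow_div_log_of_abs_lt_one hr).mul_left (c ^ 2 * r))
  rw [show a ^ 2 / (1 - r) ^ 2 + 2 * a * c * r / (1 - r) - c ^ 2 * r * Real.log (1 - r) =
    a ^ 2 * (1 / (1 - r) ^ 2) + 2 * a * c * (r / (1 - r)) + c ^ 2 * r * -Real.log (1 - r) by ring]
  refine hsum.congr_fun fun n => ?_
  field_simp
  ring

theorem coeff_kernel_add_mul_derivedKernel {K : Type*} [Field K] [CharZero K]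
    (α β l : K) (n : ℕ) :
    α * (l ^ n / ((n : K) + 1)) + l * β * (((n : K) / ((n : K) + 1)) * l ^ (n - 1)) =
      (β + (α - β) / ((n : K) + 1)) * l ^ n := by
  have hn : ((n : K) + 1) ≠ 0 := Nat.cast_add_one_ne_zero n
  rcases n with _ | n
  · simp
  · rw [Nat.add_sub_cancel, pow_succ]
    field_simp
    push_cast
    ring

theorem stmt14_general (l : ℂ) (hl : ‖l‖ < 1) :
    ∑' n : ℕ, ((n : ℝ) + 1) *
        ‖((Real.log (1 - ‖l‖ ^ 2) + ‖l‖ ^ 2 / (1 - ‖l‖ ^ 2) : ℝ) : ℂ) * (l ^ n / ((n : ℂ) + 1)) +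
          l * ((Real.log (1 - ‖l‖ ^ 2) : ℝ) : ℂ) *
            (((n : ℂ) / ((n : ℂ) + 1)) * l ^ (n - 1))‖ ^ 2 =
      ((Real.log (1 - ‖l‖ ^ 2)) ^ 2 + ‖l‖ ^ 2 * Real.log (1 - ‖l‖ ^ 2)) /
        (1 - ‖l‖ ^ 2) ^ 2 := by
  set r : ℝ := ‖l‖ ^ 2
  set a : ℝ := Real.log (1 - r)
  have hr : |r| < 1 := by
    rw [abs_of_nonneg (by positivity)]
    nlinarith [norm_nonneg l]
  have hr1 : 1 - r ≠ 0 := by linarith [le_abs_self r]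
  have hsummand : ∀ n : ℕ, ((n : ℝ) + 1) *
      ‖((a + r / (1 - r) : ℝ) : ℂ) * (l ^ n / ((n : ℂ) + 1)) +
        l * (a : ℂ) * (((n : ℂ) / ((n : ℂ) + 1)) * l ^ (n - 1))‖ ^ 2 =
      ((n : ℝ) + 1) * (a + r * (1 - r)⁻¹ / ((n : ℝ) + 1)) ^ 2 * r ^ n := by
    intro n
    rw [coeff_kernel_add_mul_derivedKernel, mul_assoc]
    congr 1
    have hcoeff : ((a : ℂ) + (((a + r / (1 - r) : ℝ) : ℂ) - a) / ((n : ℂ) + 1)) =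
        ((a + r * (1 - r)⁻¹ / ((n : ℝ) + 1) : ℝ) : ℂ) := by
      push_cast
      ring
    rw [hcoeff, norm_mul, norm_real, Real.norm_eq_abs, norm_pow, mul_pow, sq_abs, ← pow_mul,
      mul_comm n 2, pow_mul]
  rw [tsum_congr hsummand, (hasSum_succ_mul_sq_mul_geometric a (1 - r)⁻¹ hr).tsum_eq]
  field_simp
  ring

/-- For `λ` in the unit disk with `λ ≠ 0`, the squared Dirichlet norm of
`(log(1-|λ|²) + |λ|²/(1-|λ|²)) k_{conj λ} + λ log(1-|λ|²) k̃_{conj λ}`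
(whose `n`-th Taylor coefficient is
`(log(1-|λ|²) + |λ|²/(1-|λ|²)) λⁿ/(n+1) + λ log(1-|λ|²) (n/(n+1)) λ^{n-1}`) equals
`([log(1-|λ|²)]² + |λ|² log(1-|λ|²))/(1-|λ|²)²`. -/
theorem stmt14 (l : ℂ) (hl : ‖l‖ < 1) (h0 : l ≠ 0) :
    ∑' n : ℕ, ((n : ℝ) + 1) *
        ‖((Real.log (1 - ‖l‖ ^ 2) + ‖l‖ ^ 2 / (1 - ‖l‖ ^ 2) : ℝ) : ℂ) * (l ^ n / ((n : ℂ) + 1)) +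
          l * ((Real.log (1 - ‖l‖ ^ 2) : ℝ) : ℂ) *
            (((n : ℂ) / ((n : ℂ) + 1)) * l ^ (n - 1))‖ ^ 2 =
      ((Real.log (1 - ‖l‖ ^ 2)) ^ 2 + ‖l‖ ^ 2 * Real.log (1 - ‖l‖ ^ 2)) /
        (1 - ‖l‖ ^ 2) ^ 2 :=
  stmt14_general l hl
end

section
/- For \lambda in the unit disk with \lambda \ne 0, let R_\lambda: \mathcal{D} \to \mathcal{D} be the rank-one operator R_\lambda f = -\frac{f(\bar{\lambda})\,\bar{\lambda}}{[\log(1-|\lambda|^2)]^2}\left[\left(\log(1-|\lambda|^2) + \frac{|\lambda|^2}{1-|\lambda|^2}\right) k_{\bar{\lambda}} + \lambda\log(1-|\lambda|^2)\,\widetilde{k}_{\bar{\lambda}}\right] (this is the Wirtinger derivative \partial\Pi_1(\lambda)/\partial\lambda of the orthogonal projection \Pi_1(\lambda) onto the span of k_{\bar{\lambda}}). Then its operator norm, which coincides with its Hilbert-Schmidt norm since R_\lambda has rank one, satisfies \|R_\lambda\|^2 = -\frac{\log(1-|\lambda|^2) + |\lambda|^2}{[\log(1-|\lambda|^2)(1-|\lambda|^2)]^2}.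 -/
/-!
Evaluation at `conj λ` is the inner product with `k_{conj λ}`, so `R` is the rank-one operator
`f ↦ ⟪k_{conj λ}, f⟫ • c v`; its operator norm and its Hilbert-Schmidt norm (by Parseval) both
equal `‖k_{conj λ}‖ ‖c v‖`. Since `λ k̃_{conj λ}` has the coefficients of `k_{conj λ}` multiplied
by `n`, both norms reduce, with `r = |λ|²`, to the series `∑ rⁿ/(n+1) = -log(1-r)/r`, `∑ rⁿ` and
`∑ n rⁿ`.
-/

open Complex Metric

noncomputable section

/-- The Dirichlet space, modelled as `ℓ²` via the orthonormal basis `zⁿ/√(n+1)`: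
an element `g` corresponds to the analytic function with Taylor coefficients
`g n/√(n+1)`, i.e. `f(z) = ∑ (g n/√(n+1)) zⁿ`;  `evalD g z` is this value `f(z)`. -/
def evalD {E : Type*} [NormedAddCommGroup E] [InnerProductSpace ℂ E]
    (g : lp (fun _ : ℕ => E) 2) (z : ℂ) : E :=
  ∑' n : ℕ, (z ^ n / (Real.sqrt ((n : ℝ) + 1) : ℂ)) • g n

/-- The squared Hilbert-Schmidt norm of an operator, computed in a Hilbert basis `b`. -/
def hsNormSq {H : Type*} [NormedAddCommGroup H] [InnerProductSpace ℂ H]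
    {ι : Type*} (b : HilbertBasis ι ℂ H) (A : H →L[ℂ] H) : ℝ :=
  ∑' i, ‖A (b i)‖ ^ 2

open InnerProductSpace

theorem HilbertBasis.hasSum_norm_rankOne_apply_sq {𝕜 E F ι : Type*} [RCLike 𝕜]
    [NormedAddCommGroup E] [InnerProductSpace 𝕜 E] [SeminormedAddCommGroup F] [NormedSpace 𝕜 F]
    (b : HilbertBasis ι 𝕜 E) (x : F) (y : E) :
    HasSum (fun i => ‖rankOne 𝕜 x y (b i)‖ ^ 2) (‖rankOne 𝕜 x y‖ ^ 2) := by
  have parseval : HasSum (fun i => ‖b.repr y i‖ ^ 2) (‖y‖ ^ 2) := by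
    simpa using lp.hasSum_norm (p := 2) (by norm_num) (b.repr y)
  have hterm (i : ι) : ‖rankOne 𝕜 x y (b i)‖ ^ 2 = ‖b.repr y i‖ ^ 2 * ‖x‖ ^ 2 := by
    rw [rankOne_apply, norm_smul, norm_inner_symm, b.repr_apply_apply, mul_pow]
  rw [norm_rankOne, mul_pow, mul_comm]
  simpa only [hterm] using parseval.mul_right (‖x‖ ^ 2)

theorem hsNormSq_rankOne {H ι : Type*} [NormedAddCommGroup H] [InnerProductSpace ℂ H]
    (b : HilbertBasis ι ℂ H) (x y : H) :
    hsNormSq b (rankOne ℂ x y) = ‖rankOne ℂ x y‖ ^ 2 :=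
  (b.hasSum_norm_rankOne_apply_sq x y).tsum_eq

theorem lp.norm_sq_eq_of_hasSum {ι : Type*} {E : ι → Type*} [∀ i, NormedAddCommGroup (E i)]
    {f : lp E 2} {s : ℝ} (h : HasSum (fun i => ‖f i‖ ^ 2) s) : ‖f‖ ^ 2 = s := by
  refine HasSum.unique ?_ h
  simpa using lp.hasSum_norm (p := 2) (by norm_num) f

theorem Real.hasSum_pow_div_succ {r : ℝ} (hr0 : r ≠ 0) (hr : |r| < 1) :
    HasSum (fun n : ℕ => r ^ n / (n + 1)) (-Real.log (1 - r) / r) :=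
  ((Real.hasSum_pow_div_log_of_abs_lt_one hr).div_const r).congr_fun fun n => by
    field_simp
    ring

theorem Real.hasSum_sq_add_mul_pow_div_succ {r : ℝ} (hr0 : r ≠ 0) (hr : |r| < 1) (a b : ℝ) :
    HasSum (fun n : ℕ => (a + n * b) ^ 2 * (r ^ n / (n + 1)))
      ((a - b) ^ 2 * (-Real.log (1 - r) / r) + (2 * a * b - b ^ 2) * (1 - r)⁻¹ +
        b ^ 2 * (r / (1 - r) ^ 2)) := by
  have hlog := Real.hasSum_pow_div_succ hr0 hr
  have hgeom := hasSum_geometric_of_abs_lt_one hr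
  have hgeom' : HasSum (fun n : ℕ => (n : ℝ) * r ^ n) (r / (1 - r) ^ 2) :=
    hasSum_coe_mul_geometric_of_norm_lt_one (by rwa [Real.norm_eq_abs])
  refine (((hlog.mul_left ((a - b) ^ 2)).add (hgeom.mul_left (2 * a * b - b ^ 2))).add
    (hgeom'.mul_left (b ^ 2))).congr_fun fun n => ?_
  -- `(a + n b)² = (a - b)² + (2ab - b²)(n + 1) + b² n (n + 1)`
  field_simp
  ring

theorem norm_sq_pow_div_sqrt_succ (l : ℂ) (n : ℕ) :
    ‖l ^ n / (Real.sqrt ((n : ℝ) + 1) : ℂ)‖ ^ 2 = (‖l‖ ^ 2) ^ n / (n + 1) := by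
  rw [norm_div, norm_pow, Complex.norm_real, Real.norm_of_nonneg (Real.sqrt_nonneg _), div_pow,
    Real.sq_sqrt (by positivity), ← pow_mul, mul_comm, pow_mul]

theorem evalD_conj_eq_inner {l : ℂ} {kv : lp (fun _ : ℕ => ℂ) 2}
    (hkv : ∀ n : ℕ, kv n = l ^ n / (Real.sqrt ((n : ℝ) + 1) : ℂ)) (f : lp (fun _ : ℕ => ℂ) 2) :
    evalD f (starRingEnd ℂ l) = inner ℂ kv f := by
  rw [lp.inner_eq_tsum]
  refine tsum_congr fun n => ?_
  rw [hkv n, RCLike.inner_apply, map_div₀, map_pow, Complex.conj_ofReal, smul_eq_mul, mul_comm]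

theorem norm_sq_dirichletKernel {l : ℂ} (hl : ‖l‖ < 1) (h0 : l ≠ 0)
    {kv : lp (fun _ : ℕ => ℂ) 2}
    (hkv : ∀ n : ℕ, kv n = l ^ n / (Real.sqrt ((n : ℝ) + 1) : ℂ)) :
    ‖kv‖ ^ 2 = -Real.log (1 - ‖l‖ ^ 2) / ‖l‖ ^ 2 := by
  have hr0 : 0 < ‖l‖ ^ 2 := by positivity
  have hr1 : ‖l‖ ^ 2 < 1 := by nlinarith [norm_nonneg l]
  refine lp.norm_sq_eq_of_hasSum ?_
  simp only [hkv, norm_sq_pow_div_sqrt_succ]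
  exact Real.hasSum_pow_div_succ hr0.ne' (by rwa [abs_of_pos hr0])

theorem mul_derivedKernel_apply {l : ℂ} {kv ktv : lp (fun _ : ℕ => ℂ) 2}
    (hkv : ∀ n : ℕ, kv n = l ^ n / (Real.sqrt ((n : ℝ) + 1) : ℂ))
    (hktv : ∀ n : ℕ, ktv n = ((n : ℂ) / (Real.sqrt ((n : ℝ) + 1) : ℂ)) * l ^ (n - 1))
    (n : ℕ) : l * ktv n = n * kv n := by
  rw [hkv, hktv]
  cases n with
  | zero => simp
  | succ m => rw [Nat.add_sub_cancel]; ring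

theorem norm_sq_add_smul_derivedKernel {l : ℂ} (hl : ‖l‖ < 1) (h0 : l ≠ 0)
    {kv ktv : lp (fun _ : ℕ => ℂ) 2}
    (hkv : ∀ n : ℕ, kv n = l ^ n / (Real.sqrt ((n : ℝ) + 1) : ℂ))
    (hktv : ∀ n : ℕ, ktv n = ((n : ℂ) / (Real.sqrt ((n : ℝ) + 1) : ℂ)) * l ^ (n - 1))
    (a b : ℝ) :
    ‖(a : ℂ) • kv + (l * b) • ktv‖ ^ 2 =
      (a - b) ^ 2 * (-Real.log (1 - ‖l‖ ^ 2) / ‖l‖ ^ 2) + (2 * a * b - b ^ 2) * (1 - ‖l‖ ^ 2)⁻¹ +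
        b ^ 2 * (‖l‖ ^ 2 / (1 - ‖l‖ ^ 2) ^ 2) := by
  have hr0 : 0 < ‖l‖ ^ 2 := by positivity
  have hr1 : ‖l‖ ^ 2 < 1 := by nlinarith [norm_nonneg l]
  refine lp.norm_sq_eq_of_hasSum ?_
  convert Real.hasSum_sq_add_mul_pow_div_succ hr0.ne' (by rwa [abs_of_pos hr0]) a b using 2 with n
  have hcoeff : ((a : ℂ) • kv + (l * b) • ktv) n = ((a + n * b : ℝ) : ℂ) * kv n := by
    simp only [lp.coeFn_add, lp.coeFn_smul, Pi.add_apply, Pi.smul_apply, smul_eq_mul]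
    rw [mul_comm l, mul_assoc, mul_derivedKernel_apply hkv hktv]
    push_cast
    ring
  rw [hcoeff, norm_mul, mul_pow, Complex.norm_real, Real.norm_eq_abs, sq_abs, hkv,
    norm_sq_pow_div_sqrt_succ]

/-- For `λ` in the unit disk, `λ ≠ 0`, let `kv`, `ktv` be the elements of
the Dirichlet space representing `k_{conj λ}` (Taylor coefficients `λⁿ/(n+1)`) and the
derived kernel `k̃_{conj λ}` (Taylor coefficients `(n/(n+1)) λ^{n-1}`), and let `R` be the
rank-one operator (the Wirtinger derivative `∂Π₁(λ)/∂λ` of the projection onto span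
`k_{conj λ}`)
`R f = -(f(conj λ) conj λ/[log(1-|λ|²)]²)[(log(1-|λ|²)+|λ|²/(1-|λ|²)) k_{conj λ}
        + λ log(1-|λ|²) k̃_{conj λ}]`.
Then its operator norm squared equals `-(log(1-|λ|²)+|λ|²)/[log(1-|λ|²)(1-|λ|²)]²`, and its
Hilbert-Schmidt norm coincides with its operator norm. -/
theorem stmt16 {ι : Type*} (b : HilbertBasis ι ℂ (lp (fun _ : ℕ => ℂ) 2))
    (l : ℂ) (hl : ‖l‖ < 1) (h0 : l ≠ 0)
    (kv ktv : lp (fun _ : ℕ => ℂ) 2)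
    (hkv : ∀ n : ℕ, kv n = l ^ n / (Real.sqrt ((n : ℝ) + 1) : ℂ))
    (hktv : ∀ n : ℕ, ktv n = ((n : ℂ) / (Real.sqrt ((n : ℝ) + 1) : ℂ)) * l ^ (n - 1))
    (R : lp (fun _ : ℕ => ℂ) 2 →L[ℂ] lp (fun _ : ℕ => ℂ) 2)
    (hR : ∀ f, R f =
      (-(evalD f (starRingEnd ℂ l)) * starRingEnd ℂ l /
          ((Real.log (1 - ‖l‖ ^ 2) : ℝ) : ℂ) ^ 2) •
        (((Real.log (1 - ‖l‖ ^ 2) + ‖l‖ ^ 2 / (1 - ‖l‖ ^ 2) : ℝ) : ℂ) • kv +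
          (l * ((Real.log (1 - ‖l‖ ^ 2) : ℝ) : ℂ)) • ktv)) :
    ‖R‖ ^ 2 = -(Real.log (1 - ‖l‖ ^ 2) + ‖l‖ ^ 2) /
        (Real.log (1 - ‖l‖ ^ 2) * (1 - ‖l‖ ^ 2)) ^ 2 ∧
      hsNormSq b R = ‖R‖ ^ 2 := by
  set v := ((Real.log (1 - ‖l‖ ^ 2) + ‖l‖ ^ 2 / (1 - ‖l‖ ^ 2) : ℝ) : ℂ) • kv +
    (l * ((Real.log (1 - ‖l‖ ^ 2) : ℝ) : ℂ)) • ktv with hv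
  set c : ℂ := -starRingEnd ℂ l / (Real.log (1 - ‖l‖ ^ 2) : ℂ) ^ 2 with hc
  have hRrankOne : R = rankOne ℂ (c • v) kv := by
    ext1 f
    rw [hR, rankOne_apply, ← evalD_conj_eq_inner hkv, smul_smul, hc]
    congr 1
    ring
  have hr0 : 0 < ‖l‖ ^ 2 := by positivity
  have hr1 : ‖l‖ ^ 2 < 1 := by nlinarith [norm_nonneg l]
  have hL : Real.log (1 - ‖l‖ ^ 2) ≠ 0 := (Real.log_neg (by linarith) (by linarith)).ne
  have hcnorm : ‖c‖ ^ 2 = ‖l‖ ^ 2 / Real.log (1 - ‖l‖ ^ 2) ^ 4 := by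
    rw [norm_div, norm_neg, RCLike.norm_conj, norm_pow, Complex.norm_real, Real.norm_eq_abs,
      div_pow, sq_abs, ← pow_mul]
  refine ⟨?_, by rw [hRrankOne, hsNormSq_rankOne]⟩
  rw [hRrankOne, norm_rankOne, norm_smul, mul_pow, mul_pow, hcnorm, hv,
    norm_sq_add_smul_derivedKernel hl h0 hkv hktv, norm_sq_dirichletKernel hl h0 hkv]
  have h1r : 1 - ‖l‖ ^ 2 ≠ 0 := by linarith
  field_simp
  ring

end
end

section
/- For every \lambda in the unit disk with 0 < |\lambda| < 1, the normalized Laplacian of the logarithm of the squared norm of the Dirichlet reproducing kernel satisfies \Delta_\lambda \log\left(\frac{-\log(1-|\lambda|^2)}{|\lambda|^2}\right) = -\frac{\log(1-|\lambda|^2) + |\lambda|^2}{[\log(1-|\lambda|^2)]^2 (1-|\lambda|^2)^2}. -/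
/-!
For a radial function `φ z = f ‖z‖²` the normalized Laplacian is `f' t + t f'' t` at `t = ‖z‖²`.
For `f t = log (-log (1 - t) / t)` and `L = log (1 - t)` one has `f' t = -1 / ((1 - t) L) - 1 / t`,
and the `1 / t` terms cancel in `f' t + t f'' t`.
-/

open Complex Metric

noncomputable section

/-- The normalized Laplacian `Δ = (1/4)(∂²/∂x² + ∂²/∂y²)` of a function on `ℂ ≃ ℝ²`. -/
def lap (φ : ℂ → ℝ) (z : ℂ) : ℝ :=
  (4 : ℝ)⁻¹ * (fderiv ℝ (fun w => fderiv ℝ φ w 1) z 1 +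
    fderiv ℝ (fun w => fderiv ℝ φ w Complex.I) z Complex.I)

open Filter Topology
open scoped RealInnerProductSpace

theorem fderiv_fderiv_comp_norm_sq_apply {E : Type*} [NormedAddCommGroup E]
    [InnerProductSpace ℝ E] {f f' : ℝ → ℝ} {f'' : ℝ} {x : E}
    (hf : ∀ᶠ s in 𝓝 (‖x‖ ^ 2), HasDerivAt f (f' s) s) (hf' : HasDerivAt f' f'' (‖x‖ ^ 2))
    (v : E) :
    fderiv ℝ (fun y => fderiv ℝ (fun z => f (‖z‖ ^ 2)) y v) x v =
      4 * ⟪x, v⟫ ^ 2 * f'' + 2 * ‖v‖ ^ 2 * f' (‖x‖ ^ 2) := by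
  have hfirst : (fun y => fderiv ℝ (fun z => f (‖z‖ ^ 2)) y v) =ᶠ[𝓝 x]
      fun y => f' (‖y‖ ^ 2) * (2 * ⟪y, v⟫) := by
    filter_upwards [(continuous_norm.pow 2).continuousAt.eventually hf] with y hy
    have hd : HasFDerivAt (fun z => f (‖z‖ ^ 2)) (f' (‖y‖ ^ 2) • (2 • innerSL ℝ y)) y :=
      hy.comp_hasFDerivAt y (hasStrictFDerivAt_norm_sq y).hasFDerivAt
    rw [hd.fderiv]
    simp only [smul_apply, coe_innerSL_apply, nsmul_eq_mul, Nat.cast_ofNat, smul_eq_mul]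
  have hinner : HasFDerivAt (fun y => 2 * ⟪y, v⟫) ((2 : ℝ) • innerSL ℝ v) x := by
    simpa [real_inner_comm] using ((innerSL ℝ v).hasFDerivAt (x := x)).const_mul 2
  have hsecond : HasFDerivAt (fun y => f' (‖y‖ ^ 2) * (2 * ⟪y, v⟫))
      (f' (‖x‖ ^ 2) • (2 : ℝ) • innerSL ℝ v + (2 * ⟪x, v⟫) • f'' • (2 • innerSL ℝ x)) x :=
    (hf'.comp_hasFDerivAt x (hasStrictFDerivAt_norm_sq x).hasFDerivAt).mul hinner
  rw [hfirst.fderiv_eq, hsecond.fderiv]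
  simp only [add_apply, smul_apply, coe_innerSL_apply, inner_self_eq_norm_sq_to_K,
    Real.ringHom_apply, smul_eq_mul, nsmul_eq_mul, Nat.cast_ofNat]
  ring

theorem lap_comp_norm_sq {f f' : ℝ → ℝ} {f'' : ℝ} {z : ℂ}
    (hf : ∀ᶠ s in 𝓝 (‖z‖ ^ 2), HasDerivAt f (f' s) s) (hf' : HasDerivAt f' f'' (‖z‖ ^ 2)) :
    lap (fun w => f (‖w‖ ^ 2)) z = f' (‖z‖ ^ 2) + ‖z‖ ^ 2 * f'' := by
  rw [lap, fderiv_fderiv_comp_norm_sq_apply hf hf', fderiv_fderiv_comp_norm_sq_apply hf hf']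
  simp only [Complex.inner, norm_one, norm_I, ← normSq_eq_norm_sq, normSq_apply, one_mul, mul_re,
    conj_re, conj_im, I_re, I_im]
  ring

theorem hasDerivAt_log_one_sub {t : ℝ} (ht : t < 1) :
    HasDerivAt (fun s => Real.log (1 - s)) (-(1 - t)⁻¹) t :=
  (((hasDerivAt_id' t).const_sub 1).log (sub_ne_zero.mpr ht.ne')).congr_deriv (by ring)

theorem hasDerivAt_log_neg_log_one_sub_div {t : ℝ} (ht₀ : 0 < t) (ht₁ : t < 1) :
    HasDerivAt (fun s => Real.log (-Real.log (1 - s) / s))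
      (-((1 - t) * Real.log (1 - t))⁻¹ - t⁻¹) t := by
  have hL : Real.log (1 - t) < 0 := Real.log_neg (by linarith) (by linarith)
  have hquot : HasDerivAt (fun s => -Real.log (1 - s) / s)
      ((-(-(1 - t)⁻¹) * t - -Real.log (1 - t) * 1) / t ^ 2) t :=
    (hasDerivAt_log_one_sub ht₁).neg.div (hasDerivAt_id' t) ht₀.ne'
  refine (hquot.log (div_pos (neg_pos.mpr hL) ht₀).ne').congr_deriv ?_
  field_simp [hL.ne, (sub_pos.mpr ht₁).ne']
  ring

theorem hasDerivAt_neg_inv_mul_log_one_sub_sub_inv {t : ℝ} (ht₀ : 0 < t) (ht₁ : t < 1) :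
    HasDerivAt (fun s => -((1 - s) * Real.log (1 - s))⁻¹ - s⁻¹)
      (-(1 + Real.log (1 - t)) / ((1 - t) * Real.log (1 - t)) ^ 2 + (t ^ 2)⁻¹) t := by
  have hL : Real.log (1 - t) < 0 := Real.log_neg (by linarith) (by linarith)
  have hprod : HasDerivAt (fun s => (1 - s) * Real.log (1 - s))
      ((0 - 1) * Real.log (1 - t) + (1 - t) * -(1 - t)⁻¹) t :=
    ((hasDerivAt_const t 1).sub (hasDerivAt_id' t)).mul (hasDerivAt_log_one_sub ht₁)
  refine ((hprod.inv (mul_neg_of_pos_of_neg (by linarith) hL).ne).neg.sub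
    (hasDerivAt_inv ht₀.ne')).congr_deriv ?_
  field_simp [hL.ne, (sub_pos.mpr ht₁).ne']
  ring

/-- For `0 < |λ| < 1`, the normalized Laplacian of
`λ ↦ log(‖k_λ‖²) = log(-log(1-|λ|²)/|λ|²)` equals
`-(log(1-|λ|²)+|λ|²)/([log(1-|λ|²)]²(1-|λ|²)²)`. -/
theorem stmt17 (l : ℂ) (h0 : 0 < ‖l‖) (hl : ‖l‖ < 1) :
    lap (fun w : ℂ => Real.log (-Real.log (1 - ‖w‖ ^ 2) / ‖w‖ ^ 2)) l =
      -(Real.log (1 - ‖l‖ ^ 2) + ‖l‖ ^ 2) /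
        ((Real.log (1 - ‖l‖ ^ 2)) ^ 2 * (1 - ‖l‖ ^ 2) ^ 2) := by
  have ht₀ : 0 < ‖l‖ ^ 2 := by positivity
  have ht₁ : ‖l‖ ^ 2 < 1 := pow_lt_one₀ h0.le hl two_ne_zero
  have hf := eventually_of_mem (Ioo_mem_nhds ht₀ ht₁) fun s hs =>
    hasDerivAt_log_neg_log_one_sub_div hs.1 hs.2
  rw [lap_comp_norm_sq hf (hasDerivAt_neg_inv_mul_log_one_sub_sub_inv ht₀ ht₁)]
  have hL : Real.log (1 - ‖l‖ ^ 2) < 0 := Real.log_neg (by linarith) (by linarith)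
  field_simp [hL.ne, (sub_pos.mpr ht₁).ne']
  ring

end
end
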